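/- arXiv:2009.04733 — 11 statements merged into one kernel-verified Lean document; each statement's English description precedes it below -/
import Mathlib

section
/- Let Φ be a proto-calculus on a Banach space X over a unital algebra F, and let f, g ∈ F with fg = 𝟏. Then Φ(g) is injective and Φ(g)⁻¹ ⊆ Φ(f). If in addition gf = fg (equivalently gf = 𝟏 as well), then Φ(f) = Φ(g)⁻¹. -/
open Filter Topology

variable {F : Type*} [Ring F] [Algebra ℂ F]
variable {X : Type*} [NormedAddCommGroup X] [NormedSpace ℂ X]

/-- `A` is (the graph of) the bounded everywhere-defined operator `T`. -/
def IsBddOp (A : X →ₗ.[ℂ] X) (T : X →L[ℂ] X) : Prop :=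
  ∀ x y : X, (x, y) ∈ A.graph ↔ T x = y

/-- `A` is a bounded (everywhere-defined) operator. -/
def Bdd (A : X →ₗ.[ℂ] X) : Prop := ∃ T : X →L[ℂ] X, IsBddOp A T

/-- A proto-calculus: a map from a unital algebra into closed operators
satisfying (FC1)–(FC3). -/
structure ProtoCalculus (F X : Type*) [Ring F] [Algebra ℂ F]
    [NormedAddCommGroup X] [NormedSpace ℂ X] where
  toFun : F → (X →ₗ.[ℂ] X)
  closed : ∀ f, IsClosed ((toFun f).graph : Set (X × X))
  fc1 : ∀ x y : X, (x, y) ∈ (toFun 1).graph ↔ y = x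
  fc2_smul : ∀ (l : ℂ) (f : F) (x y : X),
    (x, y) ∈ (toFun f).graph → (x, l • y) ∈ (toFun (l • f)).graph
  fc2_add : ∀ (f g : F) (x y z : X),
    (x, y) ∈ (toFun f).graph → (x, z) ∈ (toFun g).graph →
      (x, y + z) ∈ (toFun (f + g)).graph
  fc3_comp : ∀ (f g : F) (x y z : X),
    (x, y) ∈ (toFun g).graph → (y, z) ∈ (toFun f).graph →
      (x, z) ∈ (toFun (f * g)).graph
  fc3_dom : ∀ (f g : F) (x : X),
    (∃ y, (x, y) ∈ (toFun g).graph ∧ ∃ z, (y, z) ∈ (toFun f).graph) ↔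
      (x ∈ (toFun g).domain ∧ x ∈ (toFun (f * g)).domain)

/-- The set of Φ-bounded elements. -/
def ProtoCalculus.BddElems (Φ : ProtoCalculus F X) : Set F := {f | Bdd (Φ.toFun f)}

/-- The set of Φ-regularizers of `f`. -/
def ProtoCalculus.Reg (Φ : ProtoCalculus F X) (f : F) : Set F :=
  {e | Bdd (Φ.toFun e) ∧ Bdd (Φ.toFun (e * f))}

/-- `M` determines `Φ` at `f`:  `Φ(f)x = y` iff `Φ(ef)x = Φ(e)y` for all
`e ∈ M ∩ Reg(f,Φ)`. -/
def ProtoCalculus.Determines (Φ : ProtoCalculus F X) (M : Set F) (f : F) : Prop :=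
  ∀ x y : X, (x, y) ∈ (Φ.toFun f).graph ↔
    ∀ e ∈ M ∩ Φ.Reg f, ∀ z w : X,
      (x, z) ∈ (Φ.toFun (e * f)).graph → (y, w) ∈ (Φ.toFun e).graph → z = w

/-- An anchor set: a nonempty set of Φ-bounded elements with trivial common kernel. -/
def ProtoCalculus.AnchorSet (Φ : ProtoCalculus F X) (M : Set F) : Prop :=
  M.Nonempty ∧ M ⊆ Φ.BddElems ∧
    ∀ x : X, (∀ e ∈ M, (x, (0 : X)) ∈ (Φ.toFun e).graph) → x = 0

/-- `[f]_E = { e ∈ E : e f ∈ E }`. -/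
def Idx (E : Set F) (f : F) : Set F := {e ∈ E | e * f ∈ E}

/-- `E` is an algebraic core: `[f]_E` determines `Φ` at every `f`. -/
def ProtoCalculus.AlgebraicCore (Φ : ProtoCalculus F X) (E : Set F) : Prop :=
  ∀ f : F, Φ.Determines (Idx E f) f

/-- A calculus: a proto-calculus satisfying (FC4). -/
structure Calculus (F X : Type*) [Ring F] [Algebra ℂ F]
    [NormedAddCommGroup X] [NormedSpace ℂ X] extends ProtoCalculus F X where
  fc4 : ∀ f : F, toProtoCalculus.Determines toProtoCalculus.BddElems f

/-!
If `a * b = 1`, every `x ∈ dom Φ(b)` also lies in `dom Φ(a * b) = dom Φ(1) = X`, so (FC3) puts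
`Φ(b) x` into `dom Φ(a)` and gives `Φ(a) Φ(b) x = Φ(1) x = x`: `Φ(a)` is a left inverse of `Φ(b)`.
Injectivity of `Φ(b)` follows because `Φ(a)` is single-valued, and when also `b * a = 1` the roles
can be exchanged.
-/

namespace ProtoCalculus

theorem swap_mem_graph_of_mul_eq_one (Φ : ProtoCalculus F X) {a b : F} (hab : a * b = 1)
    {x y : X} (hxy : (x, y) ∈ (Φ.toFun b).graph) : (y, x) ∈ (Φ.toFun a).graph := by
  have hx_dom : x ∈ (Φ.toFun (a * b)).domain := by
    rw [hab]
    exact LinearPMap.mem_domain_of_mem_graph ((Φ.fc1 x x).mpr rfl)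
  obtain ⟨y', hy', z, hz⟩ :=
    (Φ.fc3_dom a b x).mpr ⟨LinearPMap.mem_domain_of_mem_graph hxy, hx_dom⟩
  obtain rfl : y' = y := (Φ.toFun b).mem_graph_snd_inj hy' hxy rfl
  have hxz : (x, z) ∈ (Φ.toFun 1).graph := hab ▸ Φ.fc3_comp a b x y' z hy' hz
  rwa [(Φ.fc1 x z).mp hxz] at hz

theorem eq_of_mem_graph_of_mul_eq_one (Φ : ProtoCalculus F X) {a b : F} (hab : a * b = 1)
    {x x' y : X} (hx : (x, y) ∈ (Φ.toFun b).graph) (hx' : (x', y) ∈ (Φ.toFun b).graph) :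
    x = x' :=
  (Φ.toFun a).mem_graph_snd_inj (Φ.swap_mem_graph_of_mul_eq_one hab hx)
    (Φ.swap_mem_graph_of_mul_eq_one hab hx') rfl

end ProtoCalculus

/-- If `fg = 1` then `Φ(g)` is injective and `Φ(g)⁻¹ ⊆ Φ(f)`;
if moreover `gf = fg`, then `Φ(f) = Φ(g)⁻¹`. -/
theorem stmt2 (Φ : ProtoCalculus F X) (f g : F) (hfg : f * g = 1) :
    ((∀ x x' y : X, (x, y) ∈ (Φ.toFun g).graph → (x', y) ∈ (Φ.toFun g).graph →
        x = x') ∧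
      (∀ x y : X, (x, y) ∈ (Φ.toFun g).graph → (y, x) ∈ (Φ.toFun f).graph)) ∧
    (g * f = f * g →
      ∀ x y : X, (x, y) ∈ (Φ.toFun f).graph ↔ (y, x) ∈ (Φ.toFun g).graph) := by
  refine ⟨⟨fun _ _ _ => Φ.eq_of_mem_graph_of_mul_eq_one hfg,
    fun _ _ => Φ.swap_mem_graph_of_mul_eq_one hfg⟩, fun hgf _ _ => ?_⟩
  have hgf_one : g * f = 1 := hgf.trans hfg
  exact ⟨Φ.swap_mem_graph_of_mul_eq_one hgf_one, Φ.swap_mem_graph_of_mul_eq_one hfg⟩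
end

section
/- Let Φ be a proto-calculus on a Banach space X over a unital algebra F. Then the set Bdd(F,Φ) := { f ∈ F : Φ(f) ∈ L(X) } of Φ-bounded elements is a unital subalgebra of F, and the restriction of Φ to Bdd(F,Φ) is a unital algebra homomorphism into L(X). -/
open Filter Topology

variable {F : Type*} [Ring F] [Algebra ℂ F]
variable {X : Type*} [NormedAddCommGroup X] [NormedSpace ℂ X]

theorem IsBddOp.mem_graph {A : X →ₗ.[ℂ] X} {T : X →L[ℂ] X} (h : IsBddOp A T) (x : X) :
    (x, T x) ∈ A.graph :=
  (h x (T x)).mpr rfl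

/-- A partial map is single-valued, so a graph containing the graph of an everywhere-defined
`T` equals it. -/
theorem isBddOp_of_forall_mem_graph {A : X →ₗ.[ℂ] X} {T : X →L[ℂ] X}
    (h : ∀ x, (x, T x) ∈ A.graph) : IsBddOp A T := by
  intro x y
  constructor
  · intro hy
    exact A.mem_graph_snd_inj (h x) hy rfl
  · rintro rfl
    exact h x

namespace ProtoCalculus

variable (Φ : ProtoCalculus F X)

theorem isBddOp_one : IsBddOp (Φ.toFun 1) 1 :=
  isBddOp_of_forall_mem_graph fun x => (Φ.fc1 x x).mpr rfl

theorem isBddOp_add {f g : F} {S T : X →L[ℂ] X} (hS : IsBddOp (Φ.toFun f) S)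
    (hT : IsBddOp (Φ.toFun g) T) : IsBddOp (Φ.toFun (f + g)) (S + T) :=
  isBddOp_of_forall_mem_graph fun x => Φ.fc2_add f g x _ _ (hS.mem_graph x) (hT.mem_graph x)

theorem isBddOp_mul {f g : F} {S T : X →L[ℂ] X} (hS : IsBddOp (Φ.toFun f) S)
    (hT : IsBddOp (Φ.toFun g) T) : IsBddOp (Φ.toFun (f * g)) (S.comp T) :=
  isBddOp_of_forall_mem_graph fun x =>
    Φ.fc3_comp f g x _ _ (hT.mem_graph x) (hS.mem_graph (T x))

theorem isBddOp_smul (l : ℂ) {f : F} {S : X →L[ℂ] X} (hS : IsBddOp (Φ.toFun f) S) :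
    IsBddOp (Φ.toFun (l • f)) (l • S) :=
  isBddOp_of_forall_mem_graph fun x => Φ.fc2_smul l f x _ (hS.mem_graph x)

end ProtoCalculus

/-- The Φ-bounded elements form a unital subalgebra of `F` and the
restriction of `Φ` to them is a unital algebra homomorphism into `L(X)`. -/
theorem stmt3 (Φ : ProtoCalculus F X) :
    (1 : F) ∈ Φ.BddElems ∧
    (∀ f g : F, f ∈ Φ.BddElems → g ∈ Φ.BddElems →
      f + g ∈ Φ.BddElems ∧ f * g ∈ Φ.BddElems) ∧
    (∀ (l : ℂ) (f : F), f ∈ Φ.BddElems → l • f ∈ Φ.BddElems) ∧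
    IsBddOp (Φ.toFun 1) 1 ∧
    (∀ (f g : F) (S T : X →L[ℂ] X), IsBddOp (Φ.toFun f) S → IsBddOp (Φ.toFun g) T →
      IsBddOp (Φ.toFun (f + g)) (S + T) ∧ IsBddOp (Φ.toFun (f * g)) (S.comp T)) ∧
    (∀ (l : ℂ) (f : F) (S : X →L[ℂ] X), IsBddOp (Φ.toFun f) S →
      IsBddOp (Φ.toFun (l • f)) (l • S)) := by
  refine ⟨⟨1, Φ.isBddOp_one⟩, ?_, ?_, Φ.isBddOp_one,
    fun f g S T hS hT => ⟨Φ.isBddOp_add hS hT, Φ.isBddOp_mul hS hT⟩,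
    fun l f S hS => Φ.isBddOp_smul l hS⟩
  · rintro f g ⟨S, hS⟩ ⟨T, hT⟩
    exact ⟨⟨S + T, Φ.isBddOp_add hS hT⟩, ⟨S.comp T, Φ.isBddOp_mul hS hT⟩⟩
  · rintro l f ⟨S, hS⟩
    exact ⟨l • S, Φ.isBddOp_smul l hS⟩
end

section
/- Let M ⊆ Bdd(F,Φ) determine Φ at f, and let T ∈ L(X) commute with Φ(e) and with Φ(ef) for every e ∈ M ∩ Reg(f,Φ). Then T commutes with Φ(f), i.e., TΦ(f) ⊆ Φ(f)T. -/
open Filter Topology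

variable {F : Type*} [Ring F] [Algebra ℂ F]
variable {X : Type*} [NormedAddCommGroup X] [NormedSpace ℂ X]

/-- A bounded operator `T` commutes with the (possibly unbounded) operator `A`
if `TA ⊆ AT`. -/
def Commutes (T : X →L[ℂ] X) (A : X →ₗ.[ℂ] X) : Prop :=
  ∀ x y : X, (x, y) ∈ A.graph → (T x, T y) ∈ A.graph

/-! Since `Φ(e)` and `Φ(ef)` are everywhere defined, applying the determining property at
`(T x, T y)` amounts to `Φ(ef) T x = T Φ(ef) x = T Φ(e) y = Φ(e) T y`, where the middle equality
is the determining property at `(x, y)`. -/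

theorem Bdd.exists_mem_graph {A : X →ₗ.[ℂ] X} (hA : Bdd A) (x : X) : ∃ y, (x, y) ∈ A.graph :=
  let ⟨S, hS⟩ := hA
  ⟨S x, (hS x (S x)).mpr rfl⟩

theorem Commutes.eq_apply_of_mem_graph {T : X →L[ℂ] X} {A : X →ₗ.[ℂ] X} (hT : Commutes T A)
    {x z w : X} (hz : (x, z) ∈ A.graph) (hw : (T x, w) ∈ A.graph) : w = T z :=
  A.mem_graph_snd_inj hw (hT x z hz) rfl

theorem stmt4_general (Φ : ProtoCalculus F X) (f : F) (M : Set F)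
    (hdet : Φ.Determines M f) (T : X →L[ℂ] X)
    (hcomm : ∀ e ∈ M ∩ Φ.Reg f,
      Commutes T (Φ.toFun e) ∧ Commutes T (Φ.toFun (e * f))) :
    Commutes T (Φ.toFun f) := by
  intro x y hxy
  rw [hdet (T x) (T y)]
  intro e he z w hz hw
  obtain ⟨hTe, hTef⟩ := hcomm e he
  obtain ⟨z₀, hz₀⟩ := he.2.2.exists_mem_graph x
  obtain ⟨w₀, hw₀⟩ := he.2.1.exists_mem_graph y
  have hzw₀ : z₀ = w₀ := (hdet x y).mp hxy e he z₀ w₀ hz₀ hw₀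
  rw [hTef.eq_apply_of_mem_graph hz₀ hz, hTe.eq_apply_of_mem_graph hw₀ hw, hzw₀]

/-- If `M ⊆ Bdd(F,Φ)` determines `Φ` at `f`, and `T` commutes with
`Φ(e)` and `Φ(ef)` for all `e ∈ M ∩ Reg(f,Φ)`, then `T` commutes with `Φ(f)`. -/
theorem stmt4 (Φ : ProtoCalculus F X) (f : F) (M : Set F) (hM : M ⊆ Φ.BddElems)
    (hdet : Φ.Determines M f) (T : X →L[ℂ] X)
    (hcomm : ∀ e ∈ M ∩ Φ.Reg f,
      Commutes T (Φ.toFun e) ∧ Commutes T (Φ.toFun (e * f))) :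
    Commutes T (Φ.toFun f) :=
  stmt4_general Φ f M hdet T hcomm
end

section
/- Uniqueness theorem: Let Φ₁, Φ₂ : F → C(X) be two calculi on a Banach space X and suppose there exists a set E ⊆ F such that (i) Φ₁(e) = Φ₂(e) ∈ L(X) for all e ∈ E, and (ii) every f ∈ F is anchored in E with respect to Φ₁ (i.e., the set [f]_E = { e ∈ E : ef ∈ E } is an anchor set). Then Φ₁ = Φ₂. -/
open Filter Topology

variable {F : Type*} [Ring F] [Algebra ℂ F]
variable {X : Type*} [NormedAddCommGroup X] [NormedSpace ℂ X]

theorem IsBddOp.unique {A B : X →ₗ.[ℂ] X} {T : X →L[ℂ] X} (hA : IsBddOp A T)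
    (hB : IsBddOp B T) : A = B :=
  LinearPMap.eq_of_eq_graph <| by
    ext ⟨x, y⟩
    exact (hA x y).trans (hB x y).symm

namespace ProtoCalculus

/-- `Φ(e f) x = Φ(e) y`, read as a relation between the graphs. -/
def RegularizedEq (Φ : ProtoCalculus F X) (e f : F) (x y : X) : Prop :=
  ∀ z w : X, (x, z) ∈ (Φ.toFun (e * f)).graph → (y, w) ∈ (Φ.toFun e).graph → z = w

def bddEqLocus (Φ₁ Φ₂ : ProtoCalculus F X) : Set F :=
  {e | Φ₁.toFun e = Φ₂.toFun e ∧ Bdd (Φ₁.toFun e)}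

variable {Φ Φ₁ Φ₂ : ProtoCalculus F X}

theorem isBddOp_mul_s8 {a b : F} {Ta Tb : X →L[ℂ] X} (ha : IsBddOp (Φ.toFun a) Ta)
    (hb : IsBddOp (Φ.toFun b) Tb) : IsBddOp (Φ.toFun (a * b)) (Ta ∘L Tb) := by
  intro x y
  have hx : (x, Ta (Tb x)) ∈ (Φ.toFun (a * b)).graph :=
    Φ.fc3_comp a b _ _ _ ((hb x _).2 rfl) ((ha _ _).2 rfl)
  exact ⟨fun hy => LinearPMap.mem_graph_snd_inj _ hx hy rfl, fun h => h ▸ hx⟩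

theorem bddEqLocus_comm : bddEqLocus Φ₁ Φ₂ = bddEqLocus Φ₂ Φ₁ := by
  ext e
  constructor <;> rintro ⟨heq, hbdd⟩ <;> exact ⟨heq.symm, heq ▸ hbdd⟩

theorem mul_mem_bddEqLocus {a b : F} (ha : a ∈ bddEqLocus Φ₁ Φ₂) (hb : b ∈ bddEqLocus Φ₁ Φ₂) :
    a * b ∈ bddEqLocus Φ₁ Φ₂ := by
  obtain ⟨ha_eq, Ta, hTa⟩ := ha
  obtain ⟨hb_eq, Tb, hTb⟩ := hb
  have h₁ : IsBddOp (Φ₁.toFun (a * b)) (Ta ∘L Tb) := isBddOp_mul_s8 hTa hTb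
  have h₂ : IsBddOp (Φ₂.toFun (a * b)) (Ta ∘L Tb) := isBddOp_mul_s8 (ha_eq ▸ hTa) (hb_eq ▸ hTb)
  exact ⟨h₁.unique h₂, _, h₁⟩

theorem AnchorSet.congr {M : Set F} (hM : Φ₁.AnchorSet M)
    (h : ∀ e ∈ M, Φ₁.toFun e = Φ₂.toFun e) : Φ₂.AnchorSet M := by
  obtain ⟨hne, hbdd, hker⟩ := hM
  refine ⟨hne, fun e he => show Bdd _ from h e he ▸ hbdd he, fun x hx => hker x fun e he => ?_⟩
  rw [h e he]
  exact hx e he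

theorem AnchorSet.eq_of_forall {M : Set F} (hM : Φ.AnchorSet M) {u v : X}
    (h : ∀ e ∈ M, ∀ a b : X, (u, a) ∈ (Φ.toFun e).graph → (v, b) ∈ (Φ.toFun e).graph → a = b) :
    u = v := by
  refine sub_eq_zero.mp (hM.2.2 _ fun e he => ?_)
  obtain ⟨a, ha⟩ := (hM.2.1 he).exists_mem_graph u
  obtain ⟨b, hb⟩ := (hM.2.1 he).exists_mem_graph v
  simpa [h e he a b ha hb] using (Φ.toFun e).graph.sub_mem ha hb

theorem AnchorSet.regularizedEq {M : Set F} (hM : Φ.AnchorSet M) {g f : F} {x y : X}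
    (h : ∀ e ∈ M, Φ.RegularizedEq (e * g) f x y) : Φ.RegularizedEq g f x y := by
  intro z w hz hw
  refine hM.eq_of_forall fun e he a b ha hb => h e he a b ?_ (Φ.fc3_comp e g _ _ _ hw hb)
  rw [mul_assoc]
  exact Φ.fc3_comp e (g * f) _ _ _ hz ha

end ProtoCalculus

open ProtoCalculus

theorem Calculus.regularizedEq_of_mem_bddEqLocus {Φ₁ : Calculus F X} {Φ₂ : ProtoCalculus F X}
    {f h : F} {x y : X} (hxy : (x, y) ∈ (Φ₁.toFun f).graph)
    (hh : h ∈ bddEqLocus Φ₁.toProtoCalculus Φ₂) (hhf : h * f ∈ bddEqLocus Φ₁.toProtoCalculus Φ₂) :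
    Φ₂.RegularizedEq h f x y := by
  intro z w hz hw
  rw [← hhf.1] at hz
  rw [← hh.1] at hw
  exact (Φ₁.fc4 f x y).1 hxy h ⟨hh.2, hh.2, hhf.2⟩ z w hz hw

theorem Calculus.graph_le_of_anchored {Φ₁ Φ₂ : Calculus F X} {E : Set F}
    (hE : E ⊆ bddEqLocus Φ₁.toProtoCalculus Φ₂.toProtoCalculus)
    (hanchor : ∀ f, Φ₂.AnchorSet (Idx E f)) (f : F) :
    (Φ₁.toFun f).graph ≤ (Φ₂.toFun f).graph := by
  rintro ⟨x, y⟩ hxy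
  refine (Φ₂.fc4 f x y).2 fun g _ => (hanchor (g * f)).regularizedEq fun e ⟨he, hegf⟩ =>
    (hanchor (e * g)).regularizedEq fun e' ⟨he', he'eg⟩ => ?_
  refine Φ₁.regularizedEq_of_mem_bddEqLocus hxy (hE he'eg) ?_
  rw [mul_assoc, mul_assoc]
  exact mul_mem_bddEqLocus (hE he') (hE hegf)

/-- **Uniqueness.** If two calculi agree (with bounded values) on a set
`E` in which every `f ∈ F` is anchored, then they coincide. -/
theorem stmt8 (Φ₁ Φ₂ : Calculus F X) (E : Set F)
    (h1 : ∀ e ∈ E, Φ₁.toFun e = Φ₂.toFun e ∧ Bdd (Φ₁.toFun e))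
    (h2 : ∀ f : F, Φ₁.toProtoCalculus.AnchorSet (Idx E f)) :
    ∀ f : F, Φ₁.toFun f = Φ₂.toFun f := by
  have h2' : ∀ f, Φ₂.AnchorSet (Idx E f) := fun f =>
    (h2 f).congr fun e he => (h1 e he.1).1
  have h1' : E ⊆ bddEqLocus Φ₂.toProtoCalculus Φ₁.toProtoCalculus :=
    bddEqLocus_comm (Φ₁ := Φ₁.toProtoCalculus) ▸ h1
  exact fun f => LinearPMap.eq_of_eq_graph <|
    le_antisymm (Φ₁.graph_le_of_anchored h1 h2' f) (Φ₂.graph_le_of_anchored h1' h2 f)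
end

section
/- Let Φ₁, Φ₂ : F → C(X) be proto-calculi and E ⊆ F a set on which they agree. If E is an algebraic core for Φ₂ (i.e., for each f ∈ F the set [f]_E = {e ∈ E : ef ∈ E} determines Φ₂ at f), then Φ₁(f) ⊆ Φ₂(f) for every f ∈ F. In particular, if E is an algebraic core for both, then Φ₁ = Φ₂. -/
open Filter Topology

variable {F : Type*} [Ring F] [Algebra ℂ F]
variable {X : Type*} [NormedAddCommGroup X] [NormedSpace ℂ X]

namespace ProtoCalculus

/-- For `(x, y)` in the graph of `Φ₁(f)`, (FC3) for `Φ₁` gives `Φ₁(ef)x = Φ₁(e)y`, and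
for `e ∈ M` this is exactly the test by which `Φ₂` is determined at `f`. -/
theorem graph_le_of_determines {Φ₁ Φ₂ : ProtoCalculus F X} {M : Set F} {f : F}
    (hM : ∀ e ∈ M, Φ₁.toFun e = Φ₂.toFun e ∧ Φ₁.toFun (e * f) = Φ₂.toFun (e * f))
    (hdet : Φ₂.Determines M f) :
    (Φ₁.toFun f).graph ≤ (Φ₂.toFun f).graph := by
  rintro ⟨x, y⟩ hxy
  refine (hdet x y).2 fun e ⟨heM, _⟩ z w hxz hyw => ?_
  obtain ⟨he, hef⟩ := hM e heM
  rw [← hef] at hxz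
  rw [← he] at hyw
  exact (Φ₁.toFun (e * f)).mem_graph_snd_inj hxz (Φ₁.fc3_comp e f x y w hxy hyw) rfl

theorem graph_le_of_algebraicCore {Φ₁ Φ₂ : ProtoCalculus F X} {E : Set F}
    (hE : ∀ e ∈ E, Φ₁.toFun e = Φ₂.toFun e) (hcore : Φ₂.AlgebraicCore E) (f : F) :
    (Φ₁.toFun f).graph ≤ (Φ₂.toFun f).graph :=
  graph_le_of_determines (fun _ he => ⟨hE _ he.1, hE _ he.2⟩) (hcore f)

end ProtoCalculus

theorem stmt9_general (Φ₁ Φ₂ : ProtoCalculus F X) (E : Set F)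
    (hE : ∀ e ∈ E, Φ₁.toFun e = Φ₂.toFun e)
    (hcore : Φ₂.AlgebraicCore E) :
    (∀ f : F, (Φ₁.toFun f).graph ≤ (Φ₂.toFun f).graph) ∧
    (Φ₁.AlgebraicCore E → ∀ f : F, Φ₁.toFun f = Φ₂.toFun f) := by
  refine ⟨ProtoCalculus.graph_le_of_algebraicCore hE hcore, fun hcore₁ f => ?_⟩
  have hE_symm : ∀ e ∈ E, Φ₂.toFun e = Φ₁.toFun e := fun e he => (hE e he).symm
  exact LinearPMap.eq_of_eq_graph <| le_antisymm
    (ProtoCalculus.graph_le_of_algebraicCore hE hcore f)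
    (ProtoCalculus.graph_le_of_algebraicCore hE_symm hcore₁ f)

/-- If two proto-calculi agree on a set `E` of bounded elements which
is an algebraic core for `Φ₂`, then `Φ₁(f) ⊆ Φ₂(f)` for all `f`; if `E` is an
algebraic core for both, then `Φ₁ = Φ₂`. -/
theorem stmt9 (Φ₁ Φ₂ : ProtoCalculus F X) (E : Set F)
    (hE : ∀ e ∈ E, Φ₁.toFun e = Φ₂.toFun e)
    (hEb1 : E ⊆ Φ₁.BddElems) (hEb2 : E ⊆ Φ₂.BddElems)
    (hcore : Φ₂.AlgebraicCore E) :
    (∀ f : F, (Φ₁.toFun f).graph ≤ (Φ₂.toFun f).graph) ∧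
    (Φ₁.AlgebraicCore E → ∀ f : F, Φ₁.toFun f = Φ₂.toFun f) :=
  stmt9_general Φ₁ Φ₂ E hE hcore
end

section
/- Extension theorem: Let F be a unital algebra, E ⊆ F a (not necessarily unital) subalgebra, X a Banach space, and Φ : E → L(X) an algebra homomorphism such that each f ∈ F is anchored in E (i.e., [f]_E = {e ∈ E : ef ∈ E} satisfies ⋂_{e∈[f]_E} ker Φ(e) = {0}). Then the map Φ̂ : F → C(X) defined by: Φ̂(f)x = y iff Φ(ef)x = Φ(e)y for all e ∈ [f]_E, is a well-defined calculus (satisfies FC1–FC4) that extends Φ, and it is the unique calculus on F extending Φ. -/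
open Filter Topology

variable {F : Type*} [Ring F] [Algebra ℂ F]
variable {X : Type*} [NormedAddCommGroup X] [NormedSpace ℂ X]

/-- `f` is anchored in `E` (w.r.t. the representation `φ`): the set
`[f]_E = {e ∈ E : e f ∈ E}` is nonempty and has trivial common kernel. -/
def AnchoredIn (E : NonUnitalSubalgebra ℂ F) (φ : E →ₙₐ[ℂ] (X →L[ℂ] X))
    (f : F) : Prop :=
  (∃ e : F, e ∈ E ∧ e * f ∈ E) ∧
    ∀ x : X, (∀ (e : F) (he : e ∈ E), e * f ∈ E → φ ⟨e, he⟩ x = 0) → x = 0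

/-!
Anchoring is a cancellation principle: if `φ(a)u = φ(a)v` for every `a ∈ [f]_E`, then `u = v`.
It makes the relation `Φ̂(f)x = y :⟺ φ(ef)x = φ(e)y (e ∈ [f]_E)` single-valued, and every
calculus law for `Φ̂` is checked by multiplying both sides on the left by the elements of a
suitable `[k]_E` and using that `φ` is multiplicative. Conversely, a calculus `Ψ` extending `φ`
satisfies `Ψ(e)Ψ(f) ⊆ Ψ(ef)`, so its graphs lie in those of `Φ̂`; the reverse inclusion comes
from (FC4) for `Ψ`, again by cancellation.
-/

namespace NonUnitalSubalgebra

variable {R A B : Type*} [CommSemiring R] [NonUnitalSemiring A] [Module R A]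
  [NonUnitalSemiring B] [Module R B] {S : NonUnitalSubalgebra R A} (φ : S →ₙₐ[R] B)

theorem map_mk_congr {a b : A} (ha : a ∈ S) (hb : b ∈ S) (hab : a = b) :
    φ ⟨a, ha⟩ = φ ⟨b, hb⟩ := by
  subst hab; rfl

theorem map_mk_mul {a b : A} (ha : a ∈ S) (hb : b ∈ S) (hab : a * b ∈ S) :
    φ ⟨a * b, hab⟩ = φ ⟨a, ha⟩ * φ ⟨b, hb⟩ :=
  map_mul φ ⟨a, ha⟩ ⟨b, hb⟩

theorem map_mk_add {a b : A} (ha : a ∈ S) (hb : b ∈ S) (hab : a + b ∈ S) :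
    φ ⟨a + b, hab⟩ = φ ⟨a, ha⟩ + φ ⟨b, hb⟩ :=
  map_add φ ⟨a, ha⟩ ⟨b, hb⟩

end NonUnitalSubalgebra

open NonUnitalSubalgebra

variable {E : NonUnitalSubalgebra ℂ F} {φ : E →ₙₐ[ℂ] (X →L[ℂ] X)}

theorem map_mk_mul_apply {a b : F} (ha : a ∈ E) (hb : b ∈ E) (hab : a * b ∈ E) (x : X) :
    φ ⟨a * b, hab⟩ x = φ ⟨a, ha⟩ (φ ⟨b, hb⟩ x) :=
  congrArg (fun T => T x) (map_mk_mul φ ha hb hab)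

namespace AnchoredIn

variable {f : F}

theorem eq_of_forall_map_eq (hf : AnchoredIn E φ f) {u v : X}
    (h : ∀ (a : F) (ha : a ∈ E), a * f ∈ E → φ ⟨a, ha⟩ u = φ ⟨a, ha⟩ v) :
    u = v := by
  rw [← sub_eq_zero]
  exact hf.2 _ fun a ha haf => by rw [map_sub, h a ha haf, sub_self]

theorem map_mk_eq_map_mk (hf : AnchoredIn E φ f) {c d : F} (hc : c ∈ E) (hd : d ∈ E) {u v : X}
    (h : ∀ (a : F) (ha : a ∈ E), a * f ∈ E →
      φ ⟨a * c, mul_mem ha hc⟩ u = φ ⟨a * d, mul_mem ha hd⟩ v) :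
    φ ⟨c, hc⟩ u = φ ⟨d, hd⟩ v :=
  hf.eq_of_forall_map_eq fun a ha haf => by
    rw [← map_mk_mul_apply ha hc (mul_mem ha hc), ← map_mk_mul_apply ha hd (mul_mem ha hd),
      h a ha haf]

end AnchoredIn

variable (E φ) in
/-- The graph of `Φ̂(f)`. -/
def extensionGraph (f : F) : Submodule ℂ (X × X) where
  carrier :=
    {p | ∀ (e : F) (he : e ∈ E) (hef : e * f ∈ E),
      φ ⟨e * f, hef⟩ p.1 = φ ⟨e, he⟩ p.2}
  add_mem' hp hq e he hef := by
    rw [Prod.fst_add, Prod.snd_add, map_add, map_add, hp e he hef, hq e he hef]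
  zero_mem' e he hef := by simp
  smul_mem' c p hp e he hef := by
    rw [Prod.smul_fst, Prod.smul_snd, map_smul, map_smul, hp e he hef]

theorem mem_extensionGraph {f : F} {x y : X} :
    (x, y) ∈ extensionGraph E φ f ↔
      ∀ (e : F) (he : e ∈ E) (hef : e * f ∈ E), φ ⟨e * f, hef⟩ x = φ ⟨e, he⟩ y :=
  Iff.rfl

theorem map_mk_eq_of_mem_extensionGraph {f : F} {x y : X}
    (hxy : (x, y) ∈ extensionGraph E φ f) {c e : F} (hc : c ∈ E) (he : e ∈ E)
    (hce : c = e * f) : φ ⟨c, hc⟩ x = φ ⟨e, he⟩ y := by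
  subst hce; exact hxy e he hc

theorem isClosed_extensionGraph (f : F) : IsClosed (extensionGraph E φ f : Set (X × X)) := by
  change IsClosed {p : X × X | ∀ (e : F) (he : e ∈ E) (hef : e * f ∈ E), _}
  simp only [Set.ofPred_forall]
  exact isClosed_iInter fun e => isClosed_iInter fun he => isClosed_iInter fun hef =>
    isClosed_eq (by fun_prop) (by fun_prop)

theorem eq_zero_of_mem_extensionGraph {f : F} (hf : AnchoredIn E φ f) {y : X}
    (h : ((0 : X), y) ∈ extensionGraph E φ f) : y = 0 :=
  hf.2 y fun e he hef => by rw [← h e he hef, map_zero]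

theorem mem_extensionGraph_iff_of_mem {e₀ : F} (hanch : AnchoredIn E φ e₀)
    (he₀ : e₀ ∈ E) {x y : X} :
    (x, y) ∈ extensionGraph E φ e₀ ↔ φ ⟨e₀, he₀⟩ x = y := by
  refine ⟨fun h => hanch.eq_of_forall_map_eq fun a ha hae => ?_, ?_⟩
  · rw [← map_mk_mul_apply ha he₀ hae, h a ha hae]
  · rintro rfl a ha hae
    exact map_mk_mul_apply ha he₀ hae x

theorem mem_extensionGraph_one_iff (hanch : AnchoredIn E φ 1) {x y : X} :
    (x, y) ∈ extensionGraph E φ 1 ↔ y = x := by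
  refine ⟨fun h => (hanch.eq_of_forall_map_eq fun a ha ha1 => ?_).symm, ?_⟩
  · rw [← h a ha ha1, map_mk_congr φ ha1 ha (mul_one a)]
  · rintro rfl e he he1
    rw [map_mk_congr φ he1 he (mul_one e)]

theorem extensionGraph_snd_unique {f : F} (hf : AnchoredIn E φ f) {x y z : X}
    (hy : (x, y) ∈ extensionGraph E φ f) (hz : (x, z) ∈ extensionGraph E φ f) : y = z :=
  sub_eq_zero.1 <| eq_zero_of_mem_extensionGraph hf (by simpa using sub_mem hy hz)

theorem smul_mem_extensionGraph (l : ℂ) {f : F} {x y : X}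
    (hxy : (x, y) ∈ extensionGraph E φ f) :
    (x, l • y) ∈ extensionGraph E φ (l • f) := by
  intro e he hef
  change φ _ x = φ _ (l • y)
  rcases eq_or_ne l 0 with rfl | hl
  · have h0 : (⟨e * ((0 : ℂ) • f), hef⟩ : E) = 0 := Subtype.ext (by simp)
    rw [h0, map_zero, zero_smul, map_zero, zero_apply]
  · have hef' : e * f ∈ E := by
      simpa [mul_smul_comm, smul_smul, inv_mul_cancel₀ hl] using SMulMemClass.smul_mem l⁻¹ hef
    have hmk : (⟨e * (l • f), hef⟩ : E) = l • ⟨e * f, hef'⟩ :=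
      Subtype.ext (mul_smul_comm l e f)
    rw [hmk, map_smul, smul_apply, hxy e he hef', map_smul]

theorem add_mem_extensionGraph (hanch : ∀ f : F, AnchoredIn E φ f) {f g : F} {x y z : X}
    (hy : (x, y) ∈ extensionGraph E φ f) (hz : (x, z) ∈ extensionGraph E φ g) :
    (x, y + z) ∈ extensionGraph E φ (f + g) := by
  intro e he hefg
  refine (hanch (e * f)).map_mk_eq_map_mk hefg he fun a ha haef => ?_
  have haeg : a * (e * g) ∈ E := by
    simpa only [mul_add, add_sub_cancel_left] using sub_mem (mul_mem ha hefg) haef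
  have hae := mul_mem ha he
  rw [map_mk_congr φ _ (add_mem haef haeg) (by rw [mul_add, mul_add]), map_mk_add φ haef haeg,
    add_apply, map_add,
    map_mk_eq_of_mem_extensionGraph hy haef hae (mul_assoc a e f).symm,
    map_mk_eq_of_mem_extensionGraph hz haeg hae (mul_assoc a e g).symm]

theorem mem_extensionGraph_mul_iff (hanch : ∀ f : F, AnchoredIn E φ f) {f g : F} {x y z : X}
    (hxy : (x, y) ∈ extensionGraph E φ g) :
    (y, z) ∈ extensionGraph E φ f ↔ (x, z) ∈ extensionGraph E φ (f * g) := by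
  constructor
  · intro hyz e he hefg
    refine (hanch (e * f)).map_mk_eq_map_mk hefg he fun a ha haef => ?_
    exact (map_mk_eq_of_mem_extensionGraph hxy _ haef (by simp only [mul_assoc])).trans
      (map_mk_eq_of_mem_extensionGraph hyz haef (mul_mem ha he) (by simp only [mul_assoc]))
  · intro hxz b hb hbf
    refine (hanch (b * f * g)).map_mk_eq_map_mk hbf hb fun a ha habfg => ?_
    exact (map_mk_eq_of_mem_extensionGraph hxy habfg _ (by simp only [mul_assoc])).symm.trans
      (map_mk_eq_of_mem_extensionGraph hxz habfg _ (by simp only [mul_assoc]))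

variable (E φ) in
noncomputable def extension (f : F) : X →ₗ.[ℂ] X := (extensionGraph E φ f).toLinearPMap

theorem extension_graph {f : F} (hanch : AnchoredIn E φ f) :
    (extension E φ f).graph = extensionGraph E φ f :=
  Submodule.toLinearPMap_graph_eq _ fun ⟨_, _⟩ hp (h0 : _ = 0) => by
    subst h0; exact eq_zero_of_mem_extensionGraph hanch hp

theorem isBddOp_extension {e : F} (hanch : AnchoredIn E φ e) (he : e ∈ E) :
    IsBddOp (extension E φ e) (φ ⟨e, he⟩) := fun x y => by
  rw [extension_graph hanch]; exact mem_extensionGraph_iff_of_mem hanch he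

noncomputable def extensionCalculus (hanch : ∀ f : F, AnchoredIn E φ f) : Calculus F X where
  toFun := extension E φ
  closed f := by rw [extension_graph (hanch f)]; exact isClosed_extensionGraph f
  fc1 x y := by rw [extension_graph (hanch 1)]; exact mem_extensionGraph_one_iff (hanch 1)
  fc2_smul l f x y := by simp only [extension_graph (hanch _)]; exact smul_mem_extensionGraph l
  fc2_add f g x y z := by
    simp only [extension_graph (hanch _)]; exact add_mem_extensionGraph hanch
  fc3_comp f g x y z hxy := by
    simp only [extension_graph (hanch _)] at hxy ⊢
    exact (mem_extensionGraph_mul_iff hanch hxy).1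
  fc3_dom f g x := by
    simp only [LinearPMap.mem_domain_iff, extension_graph (hanch _)]
    constructor
    · rintro ⟨y, hxy, z, hyz⟩
      exact ⟨⟨y, hxy⟩, z, (mem_extensionGraph_mul_iff hanch hxy).1 hyz⟩
    · rintro ⟨⟨y, hxy⟩, z, hxz⟩
      exact ⟨y, hxy, z, (mem_extensionGraph_mul_iff hanch hxy).2 hxz⟩
  fc4 f x y := by
    simp only [ProtoCalculus.BddElems, ProtoCalculus.Reg, Set.mem_inter_iff, Set.mem_ofPred_eq,
      extension_graph (hanch _)]
    refine ⟨fun hxy e _ z w hz hw => extensionGraph_snd_unique (hanch _) hz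
      ((mem_extensionGraph_mul_iff hanch hxy).1 hw), fun h e he hef => ?_⟩
    have hbdd := isBddOp_extension (hanch _) he
    exact h e ⟨⟨_, hbdd⟩, ⟨_, hbdd⟩, ⟨_, isBddOp_extension (hanch _) hef⟩⟩ _ _
      ((mem_extensionGraph_iff_of_mem (hanch _) hef).2 rfl)
      ((mem_extensionGraph_iff_of_mem (hanch _) he).2 rfl)

theorem ProtoCalculus.graph_le_extensionGraph (Ψ : ProtoCalculus F X)
    (hΨ : ∀ (e : F) (he : e ∈ E), IsBddOp (Ψ.toFun e) (φ ⟨e, he⟩)) (f : F) :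
    (Ψ.toFun f).graph ≤ extensionGraph E φ f := by
  rintro ⟨x, y⟩ hxy e he hef
  exact (hΨ _ hef x _).1 (Ψ.fc3_comp e f x y _ hxy ((hΨ e he y _).2 rfl))

theorem Calculus.extensionGraph_le_graph (hanch : ∀ f : F, AnchoredIn E φ f) (Ψ : Calculus F X)
    (hΨ : ∀ (e : F) (he : e ∈ E), IsBddOp (Ψ.toFun e) (φ ⟨e, he⟩)) (f : F) :
    extensionGraph E φ f ≤ (Ψ.toFun f).graph := by
  rintro ⟨x, y⟩ hxy
  refine (Ψ.fc4 f x y).2 ?_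
  rintro e ⟨-, ⟨Te, hTe⟩, ⟨Tef, hTef⟩⟩ z w hz hw
  rw [← (hTef x z).1 hz, ← (hTe y w).1 hw]
  refine (hanch (e * f)).eq_of_forall_map_eq fun b hb hbef => ?_
  have hx := Ψ.fc3_comp b (e * f) x _ _ ((hTef x _).2 rfl) ((hΨ b hb _ _).2 rfl)
  have hy := Ψ.toProtoCalculus.graph_le_extensionGraph hΨ _
    (Ψ.fc3_comp b e y _ _ ((hTe y _).2 rfl) ((hΨ b hb _ _).2 rfl))
  have hbef' : b * e * f ∈ E := by rwa [mul_assoc]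
  rw [← (hΨ _ hbef x _).1 hx, map_mk_congr φ hbef hbef' (mul_assoc b e f).symm]
  exact (mem_extensionGraph_iff_of_mem (hanch _) hbef').1
    ((mem_extensionGraph_mul_iff hanch hxy).1 hy)

theorem Calculus.toFun_eq_extension (hanch : ∀ f : F, AnchoredIn E φ f) (Ψ : Calculus F X)
    (hΨ : ∀ (e : F) (he : e ∈ E), IsBddOp (Ψ.toFun e) (φ ⟨e, he⟩)) (f : F) :
    Ψ.toFun f = extension E φ f :=
  LinearPMap.eq_of_eq_graph <| (extension_graph (hanch f)).symm ▸
    le_antisymm (Ψ.toProtoCalculus.graph_le_extensionGraph hΨ f)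
      (Ψ.extensionGraph_le_graph hanch hΨ f)

/-- **Extension theorem.** If `φ : E → L(X)` is an algebra
homomorphism on a subalgebra `E ⊆ F` such that each `f ∈ F` is anchored in `E`,
then the formula `Φ̂(f)x = y ⟺ ∀ e ∈ [f]_E, φ(ef)x = φ(e)y` defines a calculus on
`F` extending `φ`, and it is the unique calculus on `F` extending `φ`. -/
theorem stmt10 (E : NonUnitalSubalgebra ℂ F) (φ : E →ₙₐ[ℂ] (X →L[ℂ] X))
    (hanch : ∀ f : F, AnchoredIn E φ f) :
    ∃ Ψ : Calculus F X,
      (∀ (f : F) (x y : X), (x, y) ∈ (Ψ.toFun f).graph ↔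
        ∀ (e : F) (he : e ∈ E) (hef : e * f ∈ E), φ ⟨e * f, hef⟩ x = φ ⟨e, he⟩ y) ∧
      (∀ (e : F) (he : e ∈ E), IsBddOp (Ψ.toFun e) (φ ⟨e, he⟩)) ∧
      (∀ Ψ' : Calculus F X,
        (∀ (e : F) (he : e ∈ E), IsBddOp (Ψ'.toFun e) (φ ⟨e, he⟩)) →
        ∀ f : F, Ψ'.toFun f = Ψ.toFun f) :=
  ⟨extensionCalculus hanch, fun f x y => by
    simp only [extensionCalculus, extension_graph (hanch f)]; exact mem_extensionGraph,
    fun e => isBddOp_extension (hanch e), fun Ψ hΨ => Ψ.toFun_eq_extension hanch hΨ⟩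
end

section
/- Let F be a unital algebra, E ⊆ F a subalgebra, and Φ : E → L(X) a non-degenerate algebra representation (E itself is an anchor set). Define F' := { f ∈ F : for every e ∈ E, [ef]_E is an anchor set }. Then F' is a unital subalgebra of F containing E, each element of F' is anchored in E, and F' contains every unital subalgebra of F with these two properties (i.e., F' is the maximal anchored subalgebra). -/
open Filter Topology

variable {F : Type*} [Ring F] [Algebra ℂ F]
variable {X : Type*} [NormedAddCommGroup X] [NormedSpace ℂ X]

section Anchored

variable {E : NonUnitalSubalgebra ℂ F} {φ : E →ₙₐ[ℂ] (X →L[ℂ] X)} {f g : F}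

theorem AnchoredIn.mono (hf : AnchoredIn E φ f) (hfg : ∀ a ∈ E, a * f ∈ E → a * g ∈ E) :
    AnchoredIn E φ g := by
  obtain ⟨⟨a, ha, haf⟩, hker⟩ := hf
  exact ⟨⟨a, ha, hfg a ha haf⟩, fun x hx => hker x fun b hb hbf => hx b hb (hfg b hb hbf)⟩

/-- A vector killed by all of `[g]_E` is killed by `φ(b) φ(a)` for all `a ∈ [f]_E` and
`b ∈ [k a]_E`; anchoring of `k a` then gives `φ(a) x = 0`, and anchoring of `f` gives `x = 0`. -/
theorem AnchoredIn.of_mul_anchors (hf : AnchoredIn E φ f) (k : F → F)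
    (hk : ∀ a ∈ E, a * f ∈ E → AnchoredIn E φ (k a))
    (hg : ∀ a ∈ E, a * f ∈ E → ∀ b ∈ E, b * k a ∈ E → b * a * g ∈ E) :
    AnchoredIn E φ g := by
  obtain ⟨⟨a, ha, haf⟩, hker⟩ := hf
  obtain ⟨⟨b, hb, hbk⟩, -⟩ := hk a ha haf
  refine ⟨⟨b * a, mul_mem hb ha, hg a ha haf b hb hbk⟩, fun x hx => hker x fun a ha haf => ?_⟩
  refine (hk a ha haf).2 _ fun b hb hbk => ?_
  have hba : φ ⟨b * a, mul_mem hb ha⟩ x = 0 :=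
    hx (b * a) (mul_mem hb ha) (hg a ha haf b hb hbk)
  rwa [show (⟨b * a, _⟩ : E) = ⟨b, hb⟩ * ⟨a, ha⟩ from rfl, map_mul,
    mul_apply_eq_comp] at hba

theorem anchoredIn_of_mem (hne : (E : Set F).Nonempty)
    (hnd : ∀ x : X, (∀ (e : F) (he : e ∈ E), φ ⟨e, he⟩ x = 0) → x = 0) (hf : f ∈ E) :
    AnchoredIn E φ f := by
  obtain ⟨e, he⟩ := hne
  exact ⟨⟨e, he, mul_mem he hf⟩, fun x hx => hnd x fun a ha => hx a ha (mul_mem ha hf)⟩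

theorem anchoredIn_of_forall_mul (hne : (E : Set F).Nonempty)
    (hnd : ∀ x : X, (∀ (e : F) (he : e ∈ E), φ ⟨e, he⟩ x = 0) → x = 0)
    (hf : ∀ e ∈ E, AnchoredIn E φ (e * f)) : AnchoredIn E φ f := by
  obtain ⟨e, he⟩ := hne
  refine (anchoredIn_of_mem ⟨e, he⟩ hnd he).of_mul_anchors (· * f)
    (fun a ha _ => hf a ha) fun a _ _ b _ hbaf => ?_
  rwa [mul_assoc]

variable {e : F}

theorem anchoredIn_mul_add (he : e ∈ E) (hf : ∀ e ∈ E, AnchoredIn E φ (e * f))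
    (hg : ∀ e ∈ E, AnchoredIn E φ (e * g)) : AnchoredIn E φ (e * (f + g)) := by
  refine (hf e he).of_mul_anchors (fun a => a * e * g)
    (fun a ha _ => hg (a * e) (mul_mem ha he)) fun a _ haf b hb hbg => ?_
  have : b * a * (e * (f + g)) = b * (a * (e * f)) + b * (a * e * g) := by
    simp only [mul_add, mul_assoc]
  rw [this]
  exact add_mem (mul_mem hb haf) hbg

theorem anchoredIn_mul_mul (he : e ∈ E) (hf : ∀ e ∈ E, AnchoredIn E φ (e * f))
    (hg : ∀ e ∈ E, AnchoredIn E φ (e * g)) : AnchoredIn E φ (e * (f * g)) := by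
  refine (hf e he).of_mul_anchors (fun a => a * (e * f) * g)
    (fun a _ haf => hg _ haf) fun a _ _ b _ hbg => ?_
  simpa only [mul_assoc] using hbg

theorem anchoredIn_mul_smul (c : ℂ) (hf : AnchoredIn E φ (e * f)) :
    AnchoredIn E φ (e * (c • f)) :=
  hf.mono fun a _ haf => by
    rw [mul_smul_comm, mul_smul_comm]
    exact SMulMemClass.smul_mem c haf

end Anchored

/-- For a non-degenerate representation `φ : E → L(X)`, the set
`F' = {f : ∀ e ∈ E, [ef]_E is an anchor set}` is a unital subalgebra of `F`
containing `E`, each of its elements is anchored in `E`, and it contains every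
unital subalgebra of `F` with these properties. -/
theorem stmt11 (E : NonUnitalSubalgebra ℂ F) (φ : E →ₙₐ[ℂ] (X →L[ℂ] X))
    (hnd : (E : Set F).Nonempty ∧
      ∀ x : X, (∀ (e : F) (he : e ∈ E), φ ⟨e, he⟩ x = 0) → x = 0) :
    (1 : F) ∈ {f : F | ∀ e : F, e ∈ E → AnchoredIn E φ (e * f)} ∧
    (∀ f g : F, (∀ e : F, e ∈ E → AnchoredIn E φ (e * f)) →
      (∀ e : F, e ∈ E → AnchoredIn E φ (e * g)) →
      (∀ e : F, e ∈ E → AnchoredIn E φ (e * (f + g))) ∧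
      (∀ e : F, e ∈ E → AnchoredIn E φ (e * (f * g)))) ∧
    (∀ (c : ℂ) (f : F), (∀ e : F, e ∈ E → AnchoredIn E φ (e * f)) →
      ∀ e : F, e ∈ E → AnchoredIn E φ (e * (c • f))) ∧
    ((E : Set F) ⊆ {f : F | ∀ e : F, e ∈ E → AnchoredIn E φ (e * f)}) ∧
    (∀ f : F, (∀ e : F, e ∈ E → AnchoredIn E φ (e * f)) → AnchoredIn E φ f) ∧
    (∀ G : Subalgebra ℂ F, (E : Set F) ⊆ (G : Set F) →
      (∀ f ∈ G, AnchoredIn E φ f) →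
      (G : Set F) ⊆ {f : F | ∀ e : F, e ∈ E → AnchoredIn E φ (e * f)}) := by
  obtain ⟨hne, hker⟩ := hnd
  refine ⟨fun e he => ?_, fun f g hf hg => ⟨fun e he => anchoredIn_mul_add he hf hg,
    fun e he => anchoredIn_mul_mul he hf hg⟩, fun c f hf e he => anchoredIn_mul_smul c (hf e he),
    fun f hf e he => anchoredIn_of_mem hne hker (mul_mem he hf),
    fun f => anchoredIn_of_forall_mul hne hker,
    fun G hEG hG f hf e he => hG _ (G.mul_mem (hEG he) hf)⟩
  rw [mul_one]
  exact anchoredIn_of_mem hne hker he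
end

section
/- If F is a unital algebra, E ⊆ F a subalgebra, and Φ : E → L(X) an algebra representation, then the following are equivalent: (i) E is an anchor set; (ii) the unit 𝟏 of F is anchored in E; (iii) E ≠ ∅ and the set { f ∈ F : ∀ e ∈ E, [ef]_E is an anchor set } is nonempty. -/
open Filter Topology

variable {F : Type*} [Ring F] [Algebra ℂ F]
variable {X : Type*} [NormedAddCommGroup X] [NormedSpace ℂ X]

/-! Always [f]_E ⊆ E, and [f]_E = E whenever E f ⊆ E, e.g. for f = 𝟏 or f ∈ E (E is closed
under multiplication). So anchoring any f forces E to be an anchor set, which in turn anchors 𝟏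
and all of E. -/

section Anchored

variable (E : NonUnitalSubalgebra ℂ F) (φ : E →ₙₐ[ℂ] (X →L[ℂ] X))

def IsAnchorSet : Prop :=
  (E : Set F).Nonempty ∧ ∀ x : X, (∀ (e : F) (he : e ∈ E), φ ⟨e, he⟩ x = 0) → x = 0

variable {E φ}

theorem AnchoredIn.isAnchorSet {f : F} (hf : AnchoredIn E φ f) : IsAnchorSet E φ := by
  obtain ⟨⟨e, he, -⟩, hker⟩ := hf
  exact ⟨⟨e, he⟩, fun x hx => hker x fun e' he' _ => hx e' he'⟩

theorem IsAnchorSet.anchoredIn_of_mul_mem (hE : IsAnchorSet E φ) {f : F}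
    (hf : ∀ e ∈ E, e * f ∈ E) : AnchoredIn E φ f := by
  obtain ⟨⟨e, he⟩, hker⟩ := hE
  exact ⟨⟨e, he, hf e he⟩, fun x hx => hker x fun e' he' => hx e' he' (hf e' he')⟩

end Anchored

/-- Equivalence of: (i) `E` is an anchor set; (ii) `𝟏` is anchored
in `E`; (iii) `E ≠ ∅` and the maximal anchored set is nonempty. -/
theorem stmt12 (E : NonUnitalSubalgebra ℂ F) (φ : E →ₙₐ[ℂ] (X →L[ℂ] X)) :
    List.TFAE [
      ((E : Set F).Nonempty ∧
        ∀ x : X, (∀ (e : F) (he : e ∈ E), φ ⟨e, he⟩ x = 0) → x = 0),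
      AnchoredIn E φ (1 : F),
      ((E : Set F).Nonempty ∧
        {f : F | ∀ e : F, e ∈ E → AnchoredIn E φ (e * f)}.Nonempty)] := by
  tfae_have 1 → 2 := fun hE =>
    IsAnchorSet.anchoredIn_of_mul_mem hE fun e he => by rwa [mul_one]
  tfae_have 2 → 3 := fun h1 =>
    ⟨h1.isAnchorSet.1, 1, fun e he =>
      h1.isAnchorSet.anchoredIn_of_mul_mem fun e' he' => by rw [mul_one]; exact mul_mem he' he⟩
  tfae_have 3 → 1 := fun ⟨⟨e, he⟩, _, hf⟩ => (hf e he).isAnchorSet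
  tfae_finish
end

section
/- Let (e_n) be a weak approximate identity for f ∈ F with respect to a proto-calculus Φ (so Φ(e_n) → I weakly and Φ(e_n)Φ(f) ⊆ Φ(f)Φ(e_n) = Φ(f e_n) ∈ L(X) for all n). Then the span D of ⋃_n ran(Φ(e_n)) is dense in X, D ⊆ dom(Φ(f)), and dom(Φ(f)) ∩ D is a core for the closed operator Φ(f). -/
/-!
If `T n → I` weakly, then every `x` is a weak limit of the points `T n x` of `D`, and by Mazur's
theorem weak limits of a subspace lie in its norm closure, so `D` is dense. The same argument in
`X × X`, applied to the points `(T n x, T n y)` of the graph of `Φ(f)` (which is invariant under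
`T n × T n` because `Φ(e_n)Φ(f) ⊆ Φ(f)Φ(e_n)`) with first coordinate in `D`, shows that these
points are dense in the closed graph. Finally `ran Φ(e_n) ⊆ dom Φ(f)` because `Φ(f)Φ(e_n) = Φ(f e_n)`
is everywhere defined.
-/

open Filter Topology

variable {F : Type*} [Ring F] [Algebra ℂ F]
variable {X : Type*} [NormedAddCommGroup X] [NormedSpace ℂ X]

/-- `(e_n)` together with the bounded operators `T n = Φ(e_n)` is an approximate
identity *for* `f`: `Φ(e_n)Φ(f) ⊆ Φ(f)Φ(e_n) = Φ(f e_n) ∈ L(X)` for all `n`. -/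
def IsAIFor {F : Type*} [CommRing F] [Algebra ℂ F] (Φ : ProtoCalculus F X)
    (e : ℕ → F) (T : ℕ → X →L[ℂ] X) (f : F) : Prop :=
  (∀ n, IsBddOp (Φ.toFun (e n)) (T n)) ∧
  (∀ n, Bdd (Φ.toFun (f * e n))) ∧
  (∀ (n : ℕ) (x y : X), (x, y) ∈ (Φ.toFun f).graph →
    (T n x, T n y) ∈ (Φ.toFun f).graph) ∧
  (∀ (n : ℕ) (x z : X),
    (x, z) ∈ (Φ.toFun (f * e n)).graph ↔ (T n x, z) ∈ (Φ.toFun f).graph)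

section WeakLimits

variable {𝕜 E E' ι : Type*} [RCLike 𝕜] {L : Filter ι}
  [NormedAddCommGroup E] [NormedSpace 𝕜 E] [NormedAddCommGroup E'] [NormedSpace 𝕜 E']

theorem Submodule.mem_closure_of_forall_tendsto [NormedSpace ℝ E] [IsScalarTower ℝ 𝕜 E]
    [L.NeBot] (S : Submodule 𝕜 E) {s : ι → E} {x : E} (hs : ∀ i, s i ∈ S)
    (h : ∀ l : StrongDual 𝕜 E, Tendsto (fun i => l (s i)) L (𝓝 (l x))) :
    x ∈ closure (S : Set E) := by
  have hweak : Tendsto (fun i => toWeakSpace 𝕜 E (s i)) L (𝓝 (toWeakSpace 𝕜 E x)) :=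
    (IsInducing.induced _).tendsto_nhds_iff.mpr (tendsto_pi_nhds.mpr h)
  have hmem : toWeakSpace 𝕜 E x ∈ closure (toWeakSpace 𝕜 E '' S) :=
    mem_closure_of_tendsto hweak (Eventually.of_forall fun i => Set.mem_image_of_mem _ (hs i))
  have hconv : Convex ℝ (S : Set E) := (S.restrictScalars ℝ).convex
  -- Mazur: a convex set has the same closure in the weak and in the norm topology.
  rw [← hconv.toWeakSpace_closure 𝕜] at hmem
  exact (toWeakSpace 𝕜 E).injective.mem_set_image.mp hmem

theorem tendsto_prodMk_of_forall_tendsto {s : ι → E} {t : ι → E'} {x : E} {y : E'}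
    (hs : ∀ l : StrongDual 𝕜 E, Tendsto (fun i => l (s i)) L (𝓝 (l x)))
    (ht : ∀ l : StrongDual 𝕜 E', Tendsto (fun i => l (t i)) L (𝓝 (l y)))
    (l : StrongDual 𝕜 (E × E')) : Tendsto (fun i => l (s i, t i)) L (𝓝 (l (x, y))) := by
  simp only [← l.comp_inl_add_comp_inr]
  exact (hs _).add (ht _)

end WeakLimits

section ApproximateIdentity

variable {𝕜 E ι : Type*} [RCLike 𝕜] [NormedAddCommGroup E] [NormedSpace 𝕜 E]
  {T : ι → E →L[𝕜] E}

theorem mem_span_iUnion_range {n : ι} (x : E) :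
    T n x ∈ Submodule.span 𝕜 (⋃ n, Set.range (T n)) :=
  Submodule.subset_span (Set.mem_iUnion.2 ⟨n, x, rfl⟩)

variable [NormedSpace ℝ E] [IsScalarTower ℝ 𝕜 E] {L : Filter ι} [L.NeBot]

theorem dense_span_iUnion_range_of_forall_tendsto
    (hT : ∀ (x : E) (l : StrongDual 𝕜 E), Tendsto (fun i => l (T i x)) L (𝓝 (l x))) :
    Dense (Submodule.span 𝕜 (⋃ n, Set.range (T n)) : Set E) := fun x =>
  Submodule.mem_closure_of_forall_tendsto _ (fun _ => mem_span_iUnion_range x) (hT x)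

theorem closure_inter_fst_mem_span_iUnion_range_eq
    (hT : ∀ (x : E) (l : StrongDual 𝕜 E), Tendsto (fun i => l (T i x)) L (𝓝 (l x)))
    (G : Submodule 𝕜 (E × E)) (hG : IsClosed (G : Set (E × E)))
    (hGT : ∀ i x y, (x, y) ∈ G → (T i x, T i y) ∈ G) :
    closure ((G : Set (E × E)) ∩ {p | p.1 ∈ Submodule.span 𝕜 (⋃ n, Set.range (T n))}) = G := by
  refine (closure_minimal Set.inter_subset_left hG).antisymm fun ⟨x, y⟩ hxy => ?_
  let GD := G ⊓ (Submodule.span 𝕜 (⋃ n, Set.range (T n))).comap (LinearMap.fst 𝕜 E E)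
  exact GD.mem_closure_of_forall_tendsto (s := fun i => (T i x, T i y))
    (fun i => ⟨hGT i x y hxy, mem_span_iUnion_range x⟩)
    (tendsto_prodMk_of_forall_tendsto (hT x) (hT y))

end ApproximateIdentity

theorem IsAIFor.span_iUnion_range_le_domain {F : Type*} [CommRing F] [Algebra ℂ F]
    {Φ : ProtoCalculus F X} {e : ℕ → F} {T : ℕ → X →L[ℂ] X} {f : F} (hAI : IsAIFor Φ e T f) :
    Submodule.span ℂ (⋃ n, Set.range (T n)) ≤ (Φ.toFun f).domain := by
  obtain ⟨-, hbdd, -, hgraph⟩ := hAI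
  rw [Submodule.span_le]
  rintro _ ⟨_, ⟨n, rfl⟩, x, rfl⟩
  obtain ⟨S, hS⟩ := hbdd n
  exact LinearPMap.mem_domain_of_mem_graph ((hgraph n x (S x)).mp ((hS x (S x)).mpr rfl))

/-- For a weak approximate identity `(e_n)` for `f`, the span `D` of
the ranges of the `Φ(e_n)` is dense in `X`, contained in `dom Φ(f)`, and
`dom Φ(f) ∩ D` is a core for `Φ(f)`. -/
theorem stmt13 {F : Type*} [CommRing F] [Algebra ℂ F] (Φ : ProtoCalculus F X)
    (f : F) (e : ℕ → F) (T : ℕ → X →L[ℂ] X)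
    (hAI : IsAIFor Φ e T f)
    (hweak : ∀ (x : X) (l : X →L[ℂ] ℂ),
      Tendsto (fun n => l (T n x)) atTop (𝓝 (l x))) :
    Dense ((Submodule.span ℂ (⋃ n, Set.range (T n)) : Submodule ℂ X) : Set X) ∧
    ((Submodule.span ℂ (⋃ n, Set.range (T n)) : Submodule ℂ X) : Set X) ⊆
      ((Φ.toFun f).domain : Set X) ∧
    closure (((Φ.toFun f).graph : Set (X × X)) ∩
        {p : X × X | p.1 ∈ Submodule.span ℂ (⋃ n, Set.range (T n))}) =
      ((Φ.toFun f).graph : Set (X × X)) := by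
  refine ⟨dense_span_iUnion_range_of_forall_tendsto hweak, hAI.span_iUnion_range_le_domain, ?_⟩
  obtain ⟨-, -, hcomm, -⟩ := hAI
  exact closure_inter_fst_mem_span_iUnion_range_eq hweak _ (Φ.closed f) hcomm
end

section
/- Let Φ : F → C(X) be a proto-calculus over a commutative unital algebra and (e_n) a weak approximate identity for both f and g. Then (e_n) is a weak approximate identity for f+g, and the closure of Φ(f) + Φ(g) equals Φ(f+g). -/
open Filter Topology

variable {F : Type*} [Ring F] [Algebra ℂ F]
variable {X : Type*} [NormedAddCommGroup X] [NormedSpace ℂ X]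

/-!
The sum `Φ(f) + Φ(g)` is always contained in the closed operator `Φ(f + g)`. Conversely, if
`Φ(f + g) x = w` then `Φ(e_n) w = Φ((f + g) e_n) x = Φ(f e_n) x + Φ(g e_n) x`, and the
commutation relations put `(Φ(e_n) x, Φ(e_n) w)` in the graph of `Φ(f) + Φ(g)`. These points
converge weakly to `(x, w)`, and a graph is a subspace, so by Mazur's theorem `(x, w)` lies in
the norm closure of that graph.
-/

theorem mem_closure_of_forall_tendsto_dual {𝕜 E ι : Type*} [RCLike 𝕜] [NormedAddCommGroup E]
    [NormedSpace 𝕜 E] [NormedSpace ℝ E] [IsScalarTower ℝ 𝕜 E] {s : Set E} (hs : Convex ℝ s)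
    {L : Filter ι} [L.NeBot] {u : ι → E} {x : E} (hu : ∀ᶠ i in L, u i ∈ s)
    (hux : ∀ l : StrongDual 𝕜 E, Tendsto (fun i => l (u i)) L (𝓝 (l x))) :
    x ∈ closure s := by
  by_contra hx
  obtain ⟨l, c, hlc, hcx⟩ :=
    RCLike.geometric_hahn_banach_closed_point (𝕜 := 𝕜) hs.closure isClosed_closure hx
  have hre : Tendsto (fun i => RCLike.re (l (u i))) L (𝓝 (RCLike.re (l x))) :=
    (RCLike.continuous_re.tendsto _).comp (hux l)
  have : RCLike.re (l x) ≤ c :=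
    le_of_tendsto hre (hu.mono fun i hi => (hlc _ (subset_closure hi)).le)
  linarith

theorem StrongDual.tendsto_apply_prod {𝕜 E F ι : Type*} [NontriviallyNormedField 𝕜]
    [NormedAddCommGroup E] [NormedSpace 𝕜 E] [NormedAddCommGroup F] [NormedSpace 𝕜 F]
    {L : Filter ι} {u : ι → E} {v : ι → F} {x : E} {y : F}
    (hu : ∀ l : StrongDual 𝕜 E, Tendsto (fun i => l (u i)) L (𝓝 (l x)))
    (hv : ∀ l : StrongDual 𝕜 F, Tendsto (fun i => l (v i)) L (𝓝 (l y)))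
    (l : StrongDual 𝕜 (E × F)) : Tendsto (fun i => l (u i, v i)) L (𝓝 (l (x, y))) := by
  have hl : ∀ a b, l (a, b) = l.comp (.inl 𝕜 E F) a + l.comp (.inr 𝕜 E F) b := fun a b => by
    simp [← map_add]
  simp only [hl]
  exact (hu _).add (hv _)

theorem LinearPMap.mem_graph_add_iff {R E F : Type*} [Ring R] [AddCommGroup E] [Module R E]
    [AddCommGroup F] [Module R F] {A B : E →ₗ.[R] F} {x : E} {w : F} :
    (x, w) ∈ (A + B).graph ↔ ∃ y z, (x, y) ∈ A.graph ∧ (x, z) ∈ B.graph ∧ w = y + z := by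
  rw [mem_graph_iff]
  constructor
  · rintro ⟨⟨x, hA, hB⟩, rfl, rfl⟩
    exact ⟨_, _, A.mem_graph ⟨x, hA⟩, B.mem_graph ⟨x, hB⟩, rfl⟩
  · rintro ⟨y, z, hy, hz, rfl⟩
    have hA := mem_domain_of_mem_graph hy
    have hB := mem_domain_of_mem_graph hz
    refine ⟨⟨x, hA, hB⟩, rfl, ?_⟩
    rw [add_apply, ← (image_iff hA).mpr hy, ← (image_iff hB).mpr hz]

namespace ProtoCalculus

theorem add_le_toFun_add (Φ : ProtoCalculus F X) (f g : F) :
    Φ.toFun f + Φ.toFun g ≤ Φ.toFun (f + g) :=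
  LinearPMap.le_of_le_graph fun ⟨_, _⟩ h =>
    let ⟨_, _, hy, hz, hw⟩ := LinearPMap.mem_graph_add_iff.mp h
    hw ▸ Φ.fc2_add f g _ _ _ hy hz

theorem isBddOp_add_s15 (Φ : ProtoCalculus F X) {a b : F} {S S' : X →L[ℂ] X}
    (ha : IsBddOp (Φ.toFun a) S) (hb : IsBddOp (Φ.toFun b) S') :
    IsBddOp (Φ.toFun (a + b)) (S + S') := by
  have hmem : ∀ x, (x, S x + S' x) ∈ (Φ.toFun (a + b)).graph := fun x =>
    Φ.fc2_add a b x _ _ ((ha x _).mpr rfl) ((hb x _).mpr rfl)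
  exact fun x y => ⟨fun h => (Φ.toFun _).mem_graph_snd_inj (hmem x) h rfl, fun h => h ▸ hmem x⟩

theorem mem_graph_mul_of_isBddOp (Φ : ProtoCalculus F X) {h e : F} {T : X →L[ℂ] X}
    (hT : IsBddOp (Φ.toFun e) T) {x z : X} (hz : (T x, z) ∈ (Φ.toFun h).graph) :
    (x, z) ∈ (Φ.toFun (h * e)).graph :=
  Φ.fc3_comp h e x (T x) z ((hT x _).mpr rfl) hz

theorem mem_graph_mul_apply_of_isBddOp {F : Type*} [CommRing F] [Algebra ℂ F]
    (Φ : ProtoCalculus F X) {h e : F} {T : X →L[ℂ] X} (hT : IsBddOp (Φ.toFun e) T) {x y : X}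
    (hxy : (x, y) ∈ (Φ.toFun h).graph) : (x, T y) ∈ (Φ.toFun (h * e)).graph :=
  mul_comm e h ▸ Φ.fc3_comp e h x y (T y) hxy ((hT y _).mpr rfl)

end ProtoCalculus

namespace IsAIFor

variable {F : Type*} [CommRing F] [Algebra ℂ F] {Φ : ProtoCalculus F X} {e : ℕ → F}
  {T : ℕ → X →L[ℂ] X} {f g : F}

theorem mem_graph_add_of_mem_graph_mul (hf : IsAIFor Φ e T f) (hg : IsAIFor Φ e T g) {n : ℕ}
    {x z : X} (h : (x, z) ∈ (Φ.toFun ((f + g) * e n)).graph) :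
    (T n x, z) ∈ (Φ.toFun f + Φ.toFun g).graph := by
  obtain ⟨Sf, hSf⟩ := hf.2.1 n
  obtain ⟨Sg, hSg⟩ := hg.2.1 n
  rw [add_mul] at h
  rw [← (Φ.isBddOp_add_s15 hSf hSg x z).mp h]
  exact LinearPMap.mem_graph_add_iff.mpr ⟨Sf x, Sg x, (hf.2.2.2 n x _).mp ((hSf x _).mpr rfl),
    (hg.2.2.2 n x _).mp ((hSg x _).mpr rfl), rfl⟩

theorem add (hf : IsAIFor Φ e T f) (hg : IsAIFor Φ e T g) : IsAIFor Φ e T (f + g) := by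
  have hbdd : ∀ n, Bdd (Φ.toFun ((f + g) * e n)) := fun n => by
    obtain ⟨Sf, hSf⟩ := hf.2.1 n
    obtain ⟨Sg, hSg⟩ := hg.2.1 n
    exact ⟨Sf + Sg, add_mul f g (e n) ▸ Φ.isBddOp_add_s15 hSf hSg⟩
  have hcomm : ∀ n x z, (x, z) ∈ (Φ.toFun ((f + g) * e n)).graph ↔
      (T n x, z) ∈ (Φ.toFun (f + g)).graph := fun n x z =>
    ⟨fun h => LinearPMap.le_graph_of_le (Φ.add_le_toFun_add f g)
      (hf.mem_graph_add_of_mem_graph_mul hg h), Φ.mem_graph_mul_of_isBddOp (hf.1 n)⟩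
  exact ⟨hf.1, hbdd,
    fun n x y hxy => (hcomm n x _).mp (Φ.mem_graph_mul_apply_of_isBddOp (hf.1 n) hxy), hcomm⟩

theorem closure_graph_add (hf : IsAIFor Φ e T f) (hg : IsAIFor Φ e T g)
    (hweak : ∀ (x : X) (l : StrongDual ℂ X), Tendsto (fun n => l (T n x)) atTop (𝓝 (l x))) :
    closure ((Φ.toFun f + Φ.toFun g).graph : Set (X × X)) = (Φ.toFun (f + g)).graph := by
  refine (closure_minimal (LinearPMap.le_graph_of_le (Φ.add_le_toFun_add f g))
    (Φ.closed _)).antisymm ?_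
  rintro ⟨x, w⟩ hxw
  exact mem_closure_of_forall_tendsto_dual (𝕜 := ℂ)
    (((Φ.toFun f + Φ.toFun g).graph.restrictScalars ℝ).convex)
    (u := fun n => (T n x, T n w)) (Eventually.of_forall fun n =>
      hf.mem_graph_add_of_mem_graph_mul hg (Φ.mem_graph_mul_apply_of_isBddOp (hf.1 n) hxw))
    (StrongDual.tendsto_apply_prod (hweak x) (hweak w))

end IsAIFor

/-- If `(e_n)` is a weak approximate identity for `f` and `g`, then
it is one for `f + g`, and the closure of `Φ(f) + Φ(g)` equals `Φ(f+g)`. -/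
theorem stmt15 {F : Type*} [CommRing F] [Algebra ℂ F] (Φ : ProtoCalculus F X)
    (f g : F) (e : ℕ → F) (T : ℕ → X →L[ℂ] X)
    (hf : IsAIFor Φ e T f) (hg : IsAIFor Φ e T g)
    (hweak : ∀ (x : X) (l : X →L[ℂ] ℂ),
      Tendsto (fun n => l (T n x)) atTop (𝓝 (l x))) :
    IsAIFor Φ e T (f + g) ∧
    closure {p : X × X | ∃ y z : X,
        (p.1, y) ∈ (Φ.toFun f).graph ∧ (p.1, z) ∈ (Φ.toFun g).graph ∧
          p.2 = y + z} =
      ((Φ.toFun (f + g)).graph : Set (X × X)) := by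
  have hsum : {p : X × X | ∃ y z : X, (p.1, y) ∈ (Φ.toFun f).graph ∧
      (p.1, z) ∈ (Φ.toFun g).graph ∧ p.2 = y + z} = (Φ.toFun f + Φ.toFun g).graph := by
    ext ⟨x, w⟩
    exact LinearPMap.mem_graph_add_iff.symm
  exact ⟨hf.add hg, hsum ▸ hf.closure_graph_add hg hweak⟩
end

section
/- Closed graph theorem for the weak* topology: Let X, Y be Banach spaces and T : X' → Y' a bounded linear operator whose graph is closed with respect to the weak* topologies on X' and Y'. Then T is weak*-to-weak* continuous, and hence T = S' (the adjoint) for some bounded operator S ∈ L(Y, X). -/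
open NormedSpace

/-!
On the unit ball of `X'`, which is weak*-compact, `T` takes values in the weak*-compact ball of
radius `‖T‖` of `Y'`, and a map with closed graph into a compact set is continuous. So for each
`y : Y` the functional `Φ = (x' ↦ T x' y)` is weak*-continuous on the unit ball of `X'`: for
every `ε` it is `ε`-small on the unit ball of the annihilator of some finite set `s ⊆ X`.
Extending its restriction there by Hahn–Banach shows that `Φ` is `ε`-close to the span of the
evaluations at points of `s`. Hence `Φ` lies in the closure of the range of the canonical
isometry `X → X''`, a closed set since `X` is complete. Its preimage is `S y`, and `T = S'` is
then weak*-continuous.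
-/

theorem continuousOn_of_isClosed_graph_of_mapsTo {α β : Type*} [TopologicalSpace α]
    [TopologicalSpace β] {f : α → β} {s : Set α} {K : Set β} (hK : IsCompact K)
    (hfK : Set.MapsTo f s K) (hg : IsClosed {p : α × β | f p.1 = p.2}) :
    ContinuousOn f s := by
  intro a _
  rw [ContinuousWithinAt, Filter.tendsto_iff_ultrafilter]
  intro U hU
  have hUK : ↑(U.map f) ≤ Filter.principal K := Filter.le_principal_iff.2 <|
    Filter.mem_map.2 (Filter.mem_of_superset (hU self_mem_nhdsWithin) hfK)
  obtain ⟨b, -, hb⟩ := hK.ultrafilter_le_nhds (U.map f) hUK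
  have hUa : ↑U ≤ nhds a := hU.trans nhdsWithin_le_nhds
  have hfab : f a = b :=
    hg.mem_of_tendsto ((Filter.tendsto_id'.2 hUa).prodMk_nhds hb) (.of_forall fun _ => rfl)
  exact hfab ▸ hb

theorem exists_sum_smul_eq_of_forall_eq_zero {𝕜 E ι : Type*} [Field 𝕜] [TopologicalSpace 𝕜]
    [IsTopologicalRing 𝕜] [AddCommGroup E] [TopologicalSpace E] [Module 𝕜 E] [Fintype ι]
    (ℓ : ι → StrongDual 𝕜 E) (Φ : StrongDual 𝕜 E) (hΦ : ∀ e, (∀ i, ℓ i e = 0) → Φ e = 0) :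
    ∃ c : ι → 𝕜, ∑ i, c i • ℓ i = Φ := by
  have hker : ⨅ i, LinearMap.ker (ℓ i : E →ₗ[𝕜] 𝕜) ≤ LinearMap.ker (Φ : E →ₗ[𝕜] 𝕜) :=
    fun e he => by
      simp only [Submodule.mem_iInf, LinearMap.mem_ker] at he ⊢
      exact hΦ e he
  obtain ⟨c, hc⟩ :=
    (Submodule.mem_span_range_iff_exists_fun 𝕜).1 (mem_span_of_iInf_ker_le_ker hker)
  exact ⟨c, ContinuousLinearMap.ext fun e => by simpa using LinearMap.congr_fun hc e⟩

theorem exists_norm_sub_sum_smul_le {𝕜 E ι : Type*} [RCLike 𝕜] [NormedAddCommGroup E]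
    [NormedSpace 𝕜 E] [Fintype ι] (ℓ : ι → StrongDual 𝕜 E) (Φ : StrongDual 𝕜 E) {ε : ℝ}
    (hε : 0 ≤ ε) (hΦ : ∀ e, ‖e‖ ≤ 1 → (∀ i, ℓ i e = 0) → ‖Φ e‖ ≤ ε) :
    ∃ c : ι → 𝕜, ‖Φ - ∑ i, c i • ℓ i‖ ≤ ε := by
  let K : Submodule 𝕜 E := ⨅ i, LinearMap.ker (ℓ i : E →ₗ[𝕜] 𝕜)
  have hK : ∀ e, e ∈ K ↔ ∀ i, ℓ i e = 0 := by simp [K]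
  have hΦK : ‖Φ.comp K.subtypeL‖ ≤ ε :=
    ContinuousLinearMap.opNorm_le_of_unit_norm hε fun e he => hΦ e he.le ((hK e).1 e.2)
  obtain ⟨g, hgΦ, hg⟩ := exists_extension_norm_eq K (Φ.comp K.subtypeL)
  obtain ⟨c, hc⟩ := exists_sum_smul_eq_of_forall_eq_zero ℓ (Φ - g) fun e he => by
    simpa [sub_eq_zero] using (hgΦ ⟨e, (hK e).2 he⟩).symm
  exact ⟨c, by rwa [hc, sub_sub_cancel, hg]⟩

section WeakStarContinuousFunctionals

variable {𝕜 X : Type*} [RCLike 𝕜] [NormedAddCommGroup X] [NormedSpace 𝕜 X]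

theorem exists_finset_norm_lt_of_continuousWithinAt_closedBall
    (Φ : StrongDual 𝕜 (StrongDual 𝕜 X))
    (hΦ : ContinuousWithinAt (fun x' : WeakDual 𝕜 X => Φ (WeakDual.toStrongDual x'))
      (WeakDual.toStrongDual ⁻¹' Metric.closedBall 0 1) 0) {ε : ℝ} (hε : 0 < ε) :
    ∃ s : Finset X, ∀ x' : StrongDual 𝕜 X, ‖x'‖ ≤ 1 → (∀ x ∈ s, x' x = 0) → ‖Φ x'‖ < ε := by
  have hsmall := hΦ.tendsto (by simpa using Metric.ball_mem_nhds (0 : 𝕜) hε)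
  obtain ⟨U, hU, hUsub⟩ := mem_nhdsWithin_iff_exists_mem_nhds_inter.1 hsmall
  obtain ⟨⟨s, r⟩, hr, hball⟩ :=
    ((LinearMap.weakBilin_withSeminorms (topDualPairing 𝕜 X)).hasBasis_zero_ball.mem_iff).1 hU
  refine ⟨s, fun x' hx' hs => ?_⟩
  have hmemU : StrongDual.toWeakDual x' ∈ U := by
    refine hball ((Seminorm.mem_ball_zero _).2 (Seminorm.finset_sup_apply_lt hr fun x hx => ?_))
    show ‖x' x‖ < r
    simpa [hs x hx] using hr
  simpa using hUsub ⟨hmemU, by simpa using hx'⟩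

theorem exists_inclusionInDoubleDual_eq_of_continuousWithinAt_closedBall [CompleteSpace X]
    (Φ : StrongDual 𝕜 (StrongDual 𝕜 X))
    (hΦ : ContinuousWithinAt (fun x' : WeakDual 𝕜 X => Φ (WeakDual.toStrongDual x'))
      (WeakDual.toStrongDual ⁻¹' Metric.closedBall 0 1) 0) :
    ∃ x : X, inclusionInDoubleDual 𝕜 X x = Φ := by
  have hclosed : IsClosed (Set.range (inclusionInDoubleDual 𝕜 X)) := by
    have hJ : Isometry (inclusionInDoubleDual 𝕜 X) := (inclusionInDoubleDualLi 𝕜).isometry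
    exact hJ.isClosedEmbedding.isClosed_range
  suffices Φ ∈ closure (Set.range (inclusionInDoubleDual 𝕜 X)) from hclosed.closure_subset this
  refine (SeminormedAddCommGroup.mem_closure_iff (E := StrongDual 𝕜 (StrongDual 𝕜 X))).2
    fun ε hε => ?_
  obtain ⟨s, hs⟩ := exists_finset_norm_lt_of_continuousWithinAt_closedBall Φ hΦ (half_pos hε)
  obtain ⟨c, hc⟩ := exists_norm_sub_sum_smul_le (fun x : s => inclusionInDoubleDual 𝕜 X x) Φ
    (half_pos hε).le fun x' hx' hsx' => (hs x' hx' fun x hx => hsx' ⟨x, hx⟩).le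
  refine ⟨_, Set.mem_range_self (∑ x : s, c x • (x : X)), ?_⟩
  simpa only [map_sum, map_smul] using hc.trans_lt (half_lt_self hε)

end WeakStarContinuousFunctionals

theorem exists_preadjoint_of_forall_exists {𝕜 X Y : Type*} [RCLike 𝕜]
    [NormedAddCommGroup X] [NormedSpace 𝕜 X] [NormedAddCommGroup Y] [NormedSpace 𝕜 Y]
    (T : StrongDual 𝕜 X →L[𝕜] StrongDual 𝕜 Y)
    (hT : ∀ y : Y, ∃ x : X, ∀ x' : StrongDual 𝕜 X, x' x = T x' y) :
    ∃ S : Y →L[𝕜] X, ∀ (x' : StrongDual 𝕜 X) (y : Y), T x' y = x' (S y) := by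
  choose S hS using hT
  let S' : Y →ₗ[𝕜] X :=
    { toFun := S
      map_add' := fun y₁ y₂ => (SeparatingDual.eq_iff_forall_dual_eq (R := 𝕜)).2 fun x' => by
        simp only [hS, map_add]
      map_smul' := fun c y => (SeparatingDual.eq_iff_forall_dual_eq (R := 𝕜)).2 fun x' => by
        simp only [hS, map_smul, RingHom.id_apply] }
  refine ⟨S'.mkContinuous ‖T‖ fun y => norm_le_dual_bound 𝕜 _ (by positivity) fun x' => ?_,
    fun x' y => (hS y x').symm⟩
  calc ‖x' (S y)‖ = ‖T x' y‖ := by rw [hS]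
    _ ≤ ‖T‖ * ‖x'‖ * ‖y‖ := (T x').le_of_opNorm_le (T.le_opNorm x') y
    _ = ‖T‖ * ‖y‖ * ‖x'‖ := by ring

theorem stmt16_general {X Y : Type*}
    [NormedAddCommGroup X] [NormedSpace ℂ X] [CompleteSpace X]
    [NormedAddCommGroup Y] [NormedSpace ℂ Y]
    (T : StrongDual ℂ X →L[ℂ] StrongDual ℂ Y)
    (hclosed : IsClosed {p : WeakDual ℂ X × WeakDual ℂ Y |
      StrongDual.toWeakDual (T (WeakDual.toStrongDual p.1)) = p.2}) :
    Continuous (fun x' : WeakDual ℂ X =>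
      StrongDual.toWeakDual (T (WeakDual.toStrongDual x'))) ∧
    ∃ S : Y →L[ℂ] X, ∀ (x' : StrongDual ℂ X) (y : Y), T x' y = x' (S y) := by
  have hball : ContinuousOn (fun x' : WeakDual ℂ X =>
      StrongDual.toWeakDual (T (WeakDual.toStrongDual x')))
      (WeakDual.toStrongDual ⁻¹' Metric.closedBall 0 1) := by
    refine continuousOn_of_isClosed_graph_of_mapsTo
      (WeakDual.isCompact_closedBall 0 ‖T‖) (fun x' hx' => ?_) hclosed
    exact mem_closedBall_zero_iff.2
      ((T.le_opNorm_of_le (mem_closedBall_zero_iff.1 hx')).trans_eq (mul_one _))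
  obtain ⟨S, hS⟩ : ∃ S : Y →L[ℂ] X, ∀ (x' : StrongDual ℂ X) (y : Y), T x' y = x' (S y) := by
    refine exists_preadjoint_of_forall_exists T fun y => ?_
    obtain ⟨x, hx⟩ := exists_inclusionInDoubleDual_eq_of_continuousWithinAt_closedBall
      ((inclusionInDoubleDual ℂ Y y).comp T)
      (((WeakDual.eval_continuous y).comp_continuousOn hball).continuousWithinAt (by simp))
    exact ⟨x, fun x' => DFunLike.congr_fun hx x'⟩
  refine ⟨WeakDual.continuous_of_continuous_eval fun y => ?_, S, hS⟩
  exact (WeakDual.eval_continuous (S y)).congr fun x' => (hS _ y).symm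

/-- **Closed graph theorem for the weak* topology.** If a bounded
linear operator `T : X' → Y'` between duals of Banach spaces has a graph which is
closed for the weak* topologies, then `T` is weak*-to-weak* continuous and is the
adjoint of a bounded operator `S : Y → X`. -/
theorem stmt16 {X Y : Type*}
    [NormedAddCommGroup X] [NormedSpace ℂ X] [CompleteSpace X]
    [NormedAddCommGroup Y] [NormedSpace ℂ Y] [CompleteSpace Y]
    (T : StrongDual ℂ X →L[ℂ] StrongDual ℂ Y)
    (hclosed : IsClosed {p : WeakDual ℂ X × WeakDual ℂ Y |
      StrongDual.toWeakDual (T (WeakDual.toStrongDual p.1)) = p.2}) :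
    Continuous (fun x' : WeakDual ℂ X =>
      StrongDual.toWeakDual (T (WeakDual.toStrongDual x'))) ∧
    ∃ S : Y →L[ℂ] X, ∀ (x' : StrongDual ℂ X) (y : Y), T x' y = x' (S y) :=
  stmt16_general T hclosed
end
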